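/- Let f ∈ F₁(a,b), let Q, P be probability measures on (Ω,M), and let K be a Markov probability kernel from (Ω,M) to a measurable space (N,N'). Then: (1) for any nonempty Γ ⊂ M_b(N), D_f^Γ(K[Q] ‖ K[P]) ≤ D_f^{K[Γ]}(Q‖P), where K[Q](B) = ∫ K_x(B) Q(dx) and K[Γ] = {x ↦ ∫ g(y) K_x(dy) : g ∈ Γ}; and (2) for any nonempty Γ ⊂ M_b(Ω×N), D_f^Γ(Q⊗K ‖ P⊗K) ≤ D_f^{K[Γ]}(Q‖P), where Q⊗K is the measure on Ω×N given by (Q⊗K)(A×B) = ∫_A K_x(B) Q(dx) and K[g](x) = ∫ g(x,y) K_x(dy) for g ∈ Γ. -/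

import Mathlib

open MeasureTheory Filter Set Topology ENNReal
open scoped Classical

noncomputable section

/-- The set of bounded measurable real-valued functions on `Ω`. -/
def Mb (Ω : Type*) [MeasurableSpace Ω] : Set (Ω → ℝ) :=
  {g | Measurable g ∧ ∃ C : ℝ, ∀ x, |g x| ≤ C}

/-- The set of bounded continuous real-valued functions on `S`. -/
def Cb (S : Type*) [TopologicalSpace S] : Set (S → ℝ) :=
  {g | Continuous g ∧ ∃ C : ℝ, ∀ x, |g x| ≤ C}

/-- The positive part of an extended real number, as an element of `ℝ≥0∞`. -/
def posE (x : EReal) : ℝ≥0∞ := if x = ⊤ then ⊤ else ENNReal.ofReal x.toReal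

/-- The extended-real-valued integral of an `EReal`-valued function, defined as the
difference of the lower integrals of the positive and negative parts, with the
convention `∞ - ∞ = -∞`. -/
def eIntegral {Ω : Type*} [MeasurableSpace Ω] (P : Measure Ω) (h : Ω → EReal) : EReal :=
  ((∫⁻ x, posE (h x) ∂P : ℝ≥0∞) : EReal) - ((∫⁻ x, posE (-(h x)) ∂P : ℝ≥0∞) : EReal)

/-- The Legendre transform `f*(y) = sup_x {x*y - f(x)}` of `f : ℝ → (-∞,∞]`. -/
def fstar (f : ℝ → EReal) (y : ℝ) : EReal := ⨆ x : ℝ, (((x * y : ℝ) : EReal) - f x)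

/-- `f : ℝ → (-∞,∞]` is (the convex LSC extension of) an element of `F₁(a,b)`:
convex, lower semicontinuous, never `-∞`, finite exactly on the interval `(a,b)`
(with `+∞` strictly outside `[a,b]`), and `f(1) = 0` with `a < 1 < b`. -/
structure IsF1 (a b : EReal) (f : ℝ → EReal) : Prop where
  a_lt_one : a < ((1 : ℝ) : EReal)
  one_lt_b : ((1 : ℝ) : EReal) < b
  convex : ∀ x y t : ℝ, 0 < t → t < 1 →
    f (t * x + (1 - t) * y) ≤ ((t : ℝ) : EReal) * f x + (((1 - t : ℝ)) : EReal) * f y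
  lsc : LowerSemicontinuous f
  ne_bot : ∀ x, f x ≠ ⊥
  finite_on : ∀ x : ℝ, a < (x : EReal) → (x : EReal) < b → f x ≠ ⊤
  top_outside : ∀ x : ℝ, ((x : EReal) < a ∨ b < (x : EReal)) → f x = ⊤
  at_one : f 1 = 0

/-- `Λ_f^P[g] = inf_{ν ∈ ℝ} {ν + E_P[f*(g - ν)]}`. -/
def LambdaF {Ω : Type*} [MeasurableSpace Ω] (f : ℝ → EReal) (P : Measure Ω) (g : Ω → ℝ) :
    EReal :=
  ⨅ ν : ℝ, ((ν : EReal) + eIntegral P (fun x => fstar f (g x - ν)))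

/-- The classical `f`-divergence `D_f(Q‖P) = E_P[f(dQ/dP)]` if `Q ≪ P`, else `∞`. -/
def fDivE {Ω : Type*} [MeasurableSpace Ω] (f : ℝ → EReal) (Q P : Measure Ω) : EReal :=
  if Q ≪ P then eIntegral P (fun x => f ((Q.rnDeriv P x).toReal)) else ⊤

/-- The `(f,Γ)`-divergence `D_f^Γ(Q‖P) = sup_{g ∈ Γ} {E_Q[g] - Λ_f^P[g]}`. -/
def fGammaDiv {Ω : Type*} [MeasurableSpace Ω] (f : ℝ → EReal) (Γ : Set (Ω → ℝ))
    (Q P : Measure Ω) : EReal :=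
  ⨆ g ∈ Γ, (((∫ x, g x ∂Q : ℝ) : EReal) - LambdaF f P g)

/-- The `Γ`-IPM `W^Γ(Q,P) = sup_{g ∈ Γ} {E_Q[g] - E_P[g]}`. -/
def ipmW {Ω : Type*} [MeasurableSpace Ω] (Γ : Set (Ω → ℝ)) (Q P : Measure Ω) : EReal :=
  ⨆ g ∈ Γ, (((∫ x, g x ∂Q : ℝ) : EReal) - ((∫ x, g x ∂P : ℝ) : EReal))

end

/-
The second-coordinate version (2) is the heart of the matter. For `g` bounded measurable on
`Ω × N`, the expectation of `g` under `Q ⊗ K` equals that of `K[g]` under `Q` (Fubini), while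
`Λ_f^P[K[g]] ≤ Λ_f^{P⊗K}[g]`: for every shift `ν`, Jensen's inequality for the convex function
`f*` on each fibre `K x` gives `f*(K[g](x) - ν) ≤ E_{K x}[f*(g(x, ·) - ν)]`, and integrating in `x`
against `P` is again Fubini, legitimate because `f*(t) ≥ t` bounds the integrand from below.
Version (1) is (2) applied to the functions `g ∘ Prod.snd`, since `K[Q]` and `K[P]` are the
second marginals of `Q ⊗ K` and `P ⊗ K`, and `(f, Γ)`-divergences only see the push-forward.
-/

open MeasureTheory ProbabilityTheory

lemma posE_eq_toENNReal (x : EReal) : posE x = x.toENNReal := rfl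

lemma coe_sub_coe_eq_of_add_eq {x y z w : ℝ≥0∞} (hy : y ≠ ⊤) (hw : w ≠ ⊤) (h : x + w = z + y) :
    (x : EReal) - y = z - w := by
  by_cases hz : z = ⊤
  · have hx : x = ⊤ := by simpa [hz, hw] using h
    rw [hx, hz, ← EReal.coe_ennreal_toReal hy, ← EReal.coe_ennreal_toReal hw]
    simp
  · have hx : x ≠ ⊤ := fun hx => hz (by simpa [hx, hy] using h.symm)
    have hreal := congrArg ENNReal.toReal h
    rw [ENNReal.toReal_add hx hw, ENNReal.toReal_add hz hy] at hreal
    rw [← EReal.coe_ennreal_toReal hx, ← EReal.coe_ennreal_toReal hy,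
      ← EReal.coe_ennreal_toReal hz, ← EReal.coe_ennreal_toReal hw, ← EReal.coe_sub,
      ← EReal.coe_sub, EReal.coe_eq_coe_iff]
    linarith

section Development

variable {α β : Type*} [MeasurableSpace α] [MeasurableSpace β] {f : ℝ → EReal}

lemma eIntegral_mono (μ : Measure α) {h₁ h₂ : α → EReal} (h : ∀ x, h₁ x ≤ h₂ x) :
    eIntegral μ h₁ ≤ eIntegral μ h₂ := by
  simp only [eIntegral, posE_eq_toENNReal]
  refine EReal.sub_le_sub ?_ ?_ <;> refine EReal.coe_ennreal_le_coe_ennreal_iff.mpr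
    (lintegral_mono fun x => EReal.toENNReal_le_toENNReal ?_)
  exacts [h x, EReal.neg_le_neg_iff.mpr (h x)]

lemma eIntegral_coe_real {μ : Measure α} {φ : α → ℝ} (hφ : Integrable φ μ) :
    eIntegral μ (fun x => (φ x : EReal)) = ((∫ x, φ x ∂μ : ℝ) : EReal) := by
  have hpos : (∫⁻ x, ENNReal.ofReal (φ x) ∂μ) ≠ ⊤ :=
    (lintegral_ofReal_le_lintegral_enorm φ).trans_lt hφ.2 |>.ne
  have hneg : (∫⁻ x, ENNReal.ofReal (-φ x) ∂μ) ≠ ⊤ :=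
    (lintegral_ofReal_le_lintegral_enorm (-φ)).trans_lt hφ.neg.2 |>.ne
  simp only [eIntegral, posE_eq_toENNReal, ← EReal.coe_neg, EReal.real_coe_toENNReal]
  rw [integral_eq_lintegral_pos_part_sub_lintegral_neg_part hφ, EReal.coe_sub,
    EReal.coe_ennreal_toReal hpos, EReal.coe_ennreal_toReal hneg]

lemma eIntegral_map {μ : Measure α} {φ : α → β} (hφ : Measurable φ) {h : β → EReal}
    (hh : Measurable h) : eIntegral (μ.map φ) h = eIntegral μ (h ∘ φ) := by
  simp only [eIntegral, posE_eq_toENNReal]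
  have hneg : Measurable fun y => -h y := measurable_neg.comp hh
  rw [lintegral_map hh.ereal_toENNReal hφ, lintegral_map hneg.ereal_toENNReal hφ]
  rfl

lemma eIntegral_coe_sub_coe (μ : Measure α) {A B : α → ℝ≥0∞} (hA : Measurable A)
    (hB : Measurable B) (hB_ne_top : ∀ x, B x ≠ ⊤) (hB_int : ∫⁻ x, B x ∂μ ≠ ⊤) :
    eIntegral μ (fun x => (A x : EReal) - B x) = (∫⁻ x, A x ∂μ : EReal) - ∫⁻ x, B x ∂μ := by
  have hneg : ∀ x, -((A x : EReal) - B x) = B x - A x := fun x => by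
    rw [EReal.neg_sub (Or.inl (EReal.coe_ennreal_ne_bot _))
      (Or.inr (by simpa using hB_ne_top x)), add_comm, sub_eq_add_neg]
  simp only [eIntegral, posE_eq_toENNReal, hneg,
    EReal.toENNReal_sub (EReal.coe_ennreal_nonneg _), EReal.toENNReal_coe]
  refine coe_sub_coe_eq_of_add_eq ?_ hB_int ?_
  · exact ne_top_of_le_ne_top hB_int (lintegral_mono fun x => tsub_le_self)
  · rw [← lintegral_add_right _ hB, ← lintegral_add_left hA]
    congr 1 with x
    rw [tsub_add_eq_max, add_tsub_eq_max, max_comm]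

lemma integrable_of_mem_Mb {μ : Measure α} [IsFiniteMeasure μ] {g : α → ℝ} (hg : g ∈ Mb α) :
    Integrable g μ :=
  let ⟨hm, C, hC⟩ := hg
  Integrable.of_bound hm.aestronglyMeasurable C (ae_of_all _ hC)

lemma comp_mem_Mb {g : β → ℝ} (hg : g ∈ Mb β) {φ : α → β} (hφ : Measurable φ) :
    g ∘ φ ∈ Mb α :=
  let ⟨hm, C, hC⟩ := hg
  ⟨hm.comp hφ, C, fun x => hC (φ x)⟩

lemma lowerSemicontinuous_fstar (f : ℝ → EReal) : LowerSemicontinuous (fstar f) := by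
  refine lowerSemicontinuous_iSup fun x => ?_
  induction f x using EReal.rec with
  | bot => simp only [EReal.coe_sub_bot]; exact lowerSemicontinuous_const
  | coe r =>
    simp only [← EReal.coe_sub]
    exact (continuous_coe_real_ereal.comp (by fun_prop)).lowerSemicontinuous
  | top => simp only [EReal.sub_top]; exact lowerSemicontinuous_const

lemma measurable_fstar (f : ℝ → EReal) : Measurable (fstar f) :=
  (lowerSemicontinuous_fstar f).measurable

lemma le_fstar (hf₁ : f 1 ≤ 0) (y : ℝ) : (y : EReal) ≤ fstar f y :=
  le_iSup_of_le 1 <| by simpa using EReal.sub_le_sub (le_refl (y : EReal)) hf₁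

lemma fstar_integral_le (hf : ∀ x, f x ≠ ⊥) {μ : Measure α} [IsProbabilityMeasure μ] {φ : α → ℝ}
    (hφ : Integrable φ μ) : fstar f (∫ y, φ y ∂μ) ≤ eIntegral μ (fun y => fstar f (φ y)) := by
  refine iSup_le fun x => ?_
  cases hfx : f x using EReal.rec with
  | bot => exact absurd hfx (hf x)
  | top => simp
  | coe r =>
    have hint : Integrable (fun y => x * φ y - r) μ := (hφ.const_mul x).sub (integrable_const r)
    calc ((x * ∫ y, φ y ∂μ : ℝ) : EReal) - r = ((∫ y, (x * φ y - r) ∂μ : ℝ) : EReal) := by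
          rw [integral_sub (hφ.const_mul x) (integrable_const r), integral_const_mul,
            integral_const, EReal.coe_sub]
          simp
      _ = eIntegral μ (fun y => ((x * φ y - r : ℝ) : EReal)) := (eIntegral_coe_real hint).symm
      _ ≤ eIntegral μ (fun y => fstar f (φ y)) := eIntegral_mono μ fun y =>
          le_iSup_of_le x (by rw [hfx, EReal.coe_sub])

lemma LambdaF_map {P : Measure α} {φ : α → β} (hφ : Measurable φ) {g : β → ℝ}
    (hg : Measurable g) : LambdaF f (P.map φ) g = LambdaF f P (g ∘ φ) := by
  refine iInf_congr fun ν => congrArg _ ?_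
  exact eIntegral_map hφ (h := fun y => fstar f (g y - ν))
    ((measurable_fstar f).comp (hg.sub_const ν))

lemma fGammaDiv_map {φ : α → β} (hφ : Measurable φ) {Γ : Set (β → ℝ)}
    (hΓ : ∀ g ∈ Γ, Measurable g) (Q P : Measure α) :
    fGammaDiv f Γ (Q.map φ) (P.map φ) = fGammaDiv f ((· ∘ φ) '' Γ) Q P := by
  rw [fGammaDiv, fGammaDiv, iSup_image]
  refine iSup_congr fun g => iSup_congr fun hg => ?_
  rw [integral_map hφ.aemeasurable (hΓ g hg).aestronglyMeasurable, LambdaF_map hφ (hΓ g hg)]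
  rfl

lemma eIntegral_compProd {P : Measure α} [IsFiniteMeasure P] {K : Kernel α β} [IsMarkovKernel K]
    {h : α × β → EReal} (hh : Measurable h) {c : ℝ} (hc : ∀ z, (c : EReal) ≤ h z) :
    eIntegral (P ⊗ₘ K) h = eIntegral P (fun x => eIntegral (K x) (fun y => h (x, y))) := by
  have hpos : Measurable fun z => (h z).toENNReal := hh.ereal_toENNReal
  have hneg : Measurable fun z => (-h z).toENNReal := (measurable_neg.comp hh).ereal_toENNReal
  set B : α → ℝ≥0∞ := fun x => ∫⁻ y, (-h (x, y)).toENNReal ∂(K x)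
  have hB_le : ∀ x, B x ≤ ENNReal.ofReal (-c) := fun x =>
    calc B x ≤ ∫⁻ _, ENNReal.ofReal (-c) ∂(K x) := lintegral_mono fun y =>
          EReal.toENNReal_le_toENNReal (EReal.neg_le_neg_iff.mpr (hc (x, y)))
      _ = ENNReal.ofReal (-c) := by simp
  have hB_int : ∫⁻ x, B x ∂P ≠ ⊤ :=
    ne_top_of_le_ne_top (by simp [ENNReal.mul_eq_top]) (lintegral_mono hB_le)
  have hfiber : (fun x => eIntegral (K x) (fun y => h (x, y)))
      = fun x => ((∫⁻ y, (h (x, y)).toENNReal ∂(K x) : ℝ≥0∞) : EReal) - B x := rfl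
  rw [hfiber, eIntegral_coe_sub_coe P hpos.lintegral_kernel_prod_right'
    hneg.lintegral_kernel_prod_right'
    (fun x => ne_top_of_le_ne_top ENNReal.ofReal_ne_top (hB_le x)) hB_int, eIntegral]
  simp only [posE_eq_toENNReal]
  rw [Measure.lintegral_compProd hpos, Measure.lintegral_compProd hneg]

lemma LambdaF_kernel_le_compProd (hf : ∀ x, f x ≠ ⊥) (hf₁ : f 1 ≤ 0) {P : Measure α}
    [IsFiniteMeasure P] {K : Kernel α β} [IsMarkovKernel K] {g : α × β → ℝ} (hg : g ∈ Mb (α × β)) :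
    LambdaF f P (fun x => ∫ y, g (x, y) ∂(K x)) ≤ LambdaF f (P ⊗ₘ K) g := by
  obtain ⟨hgm, C, hC⟩ := hg
  refine iInf_mono fun ν => add_le_add le_rfl ?_
  have hfstar_ge : ∀ z, ((-C - ν : ℝ) : EReal) ≤ fstar f (g z - ν) := fun z =>
    (EReal.coe_le_coe_iff.mpr (by linarith [(abs_le.mp (hC z)).1])).trans (le_fstar hf₁ _)
  calc eIntegral P (fun x => fstar f ((∫ y, g (x, y) ∂(K x)) - ν))
      ≤ eIntegral P (fun x => eIntegral (K x) (fun y => fstar f (g (x, y) - ν))) :=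
        eIntegral_mono P fun x => by
          have hslice : Integrable (fun y => g (x, y)) (K x) :=
            integrable_of_mem_Mb (comp_mem_Mb ⟨hgm, C, hC⟩ measurable_prodMk_left)
          have hjensen := fstar_integral_le hf (φ := fun y => g (x, y) - ν)
            (hslice.sub (integrable_const ν))
          rwa [integral_sub hslice (integrable_const ν), integral_const, probReal_univ,
            one_smul] at hjensen
    _ = eIntegral (P ⊗ₘ K) (fun z => fstar f (g z - ν)) :=
        (eIntegral_compProd ((measurable_fstar f).comp (hgm.sub_const ν)) hfstar_ge).symm

theorem fGammaDiv_compProd_le (hf : ∀ x, f x ≠ ⊥) (hf₁ : f 1 ≤ 0) {Q P : Measure α}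
    [IsFiniteMeasure Q] [IsFiniteMeasure P] {K : Kernel α β} [IsMarkovKernel K]
    {Γ : Set (α × β → ℝ)} (hΓ : Γ ⊆ Mb (α × β)) :
    fGammaDiv f Γ (Q ⊗ₘ K) (P ⊗ₘ K)
      ≤ fGammaDiv f ((fun g x => ∫ y, g (x, y) ∂(K x)) '' Γ) Q P := by
  rw [fGammaDiv, fGammaDiv, iSup_image]
  refine iSup₂_mono fun g hg => EReal.sub_le_sub (le_of_eq ?_)
    (LambdaF_kernel_le_compProd hf hf₁ (hΓ hg))
  rw [Measure.integral_compProd (integrable_of_mem_Mb (hΓ hg))]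

end Development

/-- (Data processing inequality.) For `f ∈ F₁(a,b)`, probability
measures `Q, P` on `Ω` and a Markov kernel `K` from `Ω` to `N`:
(1) for nonempty `Γ ⊆ M_b(N)`, `D_f^Γ(K[Q]‖K[P]) ≤ D_f^{K[Γ]}(Q‖P)`;
(2) for nonempty `Γ ⊆ M_b(Ω × N)`, `D_f^Γ(Q⊗K‖P⊗K) ≤ D_f^{K[Γ]}(Q‖P)`. -/
theorem stmt15 {Ω N : Type*} [MeasurableSpace Ω] [MeasurableSpace N]
    (a b : EReal) (f : ℝ → EReal) (hf : IsF1 a b f)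
    (Q P : Measure Ω) [IsProbabilityMeasure Q] [IsProbabilityMeasure P]
    (K : ProbabilityTheory.Kernel Ω N) [ProbabilityTheory.IsMarkovKernel K] :
    (∀ Γ : Set (N → ℝ), Γ ⊆ Mb N → Γ.Nonempty →
      fGammaDiv f Γ (Q.bind (fun x => K x)) (P.bind (fun x => K x))
        ≤ fGammaDiv f ((fun (g : N → ℝ) => fun x => ∫ y, g y ∂(K x)) '' Γ) Q P)
    ∧ (∀ Γ : Set (Ω × N → ℝ), Γ ⊆ Mb (Ω × N) → Γ.Nonempty →
      fGammaDiv f Γ (Q.compProd K) (P.compProd K)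
        ≤ fGammaDiv f ((fun (g : Ω × N → ℝ) => fun x => ∫ y, g (x, y) ∂(K x)) '' Γ) Q P) := by
  refine ⟨fun Γ hΓ _ => ?_, fun Γ hΓ _ => fGammaDiv_compProd_le hf.ne_bot hf.at_one.le hΓ⟩
  have hΓ_snd : (· ∘ Prod.snd) '' Γ ⊆ Mb (Ω × N) := by
    rintro _ ⟨g, hg, rfl⟩
    exact comp_mem_Mb (hΓ hg) measurable_snd
  calc fGammaDiv f Γ (Q.bind (fun x => K x)) (P.bind (fun x => K x))
      = fGammaDiv f Γ ((Q ⊗ₘ K).map Prod.snd) ((P ⊗ₘ K).map Prod.snd) := by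
        rw [← Measure.snd, ← Measure.snd, Measure.snd_compProd, Measure.snd_compProd]
    _ = fGammaDiv f ((· ∘ Prod.snd) '' Γ) (Q ⊗ₘ K) (P ⊗ₘ K) :=
        fGammaDiv_map measurable_snd (fun g hg => (hΓ hg).1) _ _
    _ ≤ _ := fGammaDiv_compProd_le hf.ne_bot hf.at_one.le hΓ_snd
    _ = _ := by rw [Set.image_image]; rfl
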